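/- For every fixed y ∈ Y, the map x ↦ g(y, x) is globally Lipschitz on K̄. -/

import Mathlib

open Filter Topology MeasureTheory Set Metric Bornology RealInnerProductSpace
open scoped ENNReal NNReal

noncomputable section

namespace Bif

abbrev Xs (d : ℕ) : Type := EuclideanSpace ℝ (Fin d)
abbrev Ys (m : ℕ) : Type := EuclideanSpace ℝ (Fin m)
abbrev Zs (m d : ℕ) : Type := WithLp 2 (Ys m × Xs d)

variable {d m n : ℕ}

/-- The point `(y, x)` in `Y × ℝ^d` equipped with the product Euclidean (ℓ²) norm. -/
def ptYX (y : Ys m) (x : Xs d) : Zs m d := (WithLp.equiv 2 (Ys m × Xs d)).symm (y, x)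

def projY (p : Zs m d) : Ys m := ((WithLp.equiv 2 (Ys m × Xs d)) p).1

def projX (p : Zs m d) : Xs d := ((WithLp.equiv 2 (Ys m × Xs d)) p).2

/-- `f` is locally Lipschitz on `s`: every point of `s` has a relative
neighborhood on which `f` is Lipschitz. -/
def LocLipOn {α β : Type*} [PseudoEMetricSpace α] [PseudoEMetricSpace β]
    (s : Set α) (f : α → β) : Prop :=
  ∀ x ∈ s, ∃ C : NNReal, ∃ t ∈ 𝓝[s] x, LipschitzOnWith C f t

/-- The solution set `F(x) = {f_1(x), …, f_n(x)}`. -/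
def Fset (f : Fin n → Xs d → Ys m) (x : Xs d) : Set (Ys m) :=
  Set.range fun i => f i x

/-- The reduced Voronoi switching set `Σ°(x)`. -/
def Sigma0 (f : Fin n → Xs d → Ys m) (x : Xs d) : Set (Ys m) :=
  {y | ∃ i j : Fin n, f i x ≠ f j x ∧ ‖y - f i x‖ = ‖y - f j x‖ ∧
        ∀ k, ‖y - f i x‖ ≤ ‖y - f k x‖}

/-- The graph-closure switching set `Σ̃(x₀)`: the graph of `Σ̃` is the closure of
the graph of `Σ°` (over base points in `K`). -/
def SigmaTilde (K : Set (Xs d)) (f : Fin n → Xs d → Ys m) (x0 : Xs d) : Set (Ys m) :=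
  {y | (x0, y) ∈ closure {p : Xs d × Ys m | p.1 ∈ K ∧ p.2 ∈ Sigma0 f p.1}}

/-- `x₀` has a stable collapse pattern: on a relative neighborhood `U ⊆ K` of `x₀`
there is a partition (equivalence relation) of the branch indices such that two
branches agree at a point of `U` iff they lie in the same cluster. -/
def StableAt (K : Set (Xs d)) (f : Fin n → Xs d → Ys m) (x0 : Xs d) : Prop :=
  ∃ U ∈ 𝓝[K] x0, U ⊆ K ∧ ∃ R : Fin n → Fin n → Prop, Equivalence R ∧
    ∀ x ∈ U, ∀ i j : Fin n, (f i x = f j x ↔ R i j)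

/-- The unstable collapse set `𝒰 = K \ S`. -/
def Unstable (K : Set (Xs d)) (f : Fin n → Xs d → Ys m) : Set (Xs d) :=
  {x ∈ K | ¬ StableAt K f x}

/-- `P` is the priority nearest selector: `P y x = f i x` where `i` is the
smallest index minimizing `‖y - f i x‖`. -/
def IsPrioritySelector (f : Fin n → Xs d → Ys m) (P : Ys m → Xs d → Ys m) : Prop :=
  ∀ (y : Ys m) (x : Xs d), ∃ i : Fin n, P y x = f i x ∧
    (∀ j, ‖y - f i x‖ ≤ ‖y - f j x‖) ∧
    (∀ j, (∀ k, ‖y - f j x‖ ≤ ‖y - f k x‖) → i ≤ j)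

/-- On `closure K \ K`, `f` takes the value of the limit of `f` along `K` when this
limit exists, and `0` otherwise (limit-or-zero extension of the branch maps). -/
def IsLimitExtension (K : Set (Xs d)) (f : Fin n → Xs d → Ys m) : Prop :=
  ∀ i : Fin n, ∀ x ∈ closure K \ K,
    Tendsto (f i) (𝓝[K] x) (𝓝 (f i x)) ∨
    ((¬ ∃ L : Ys m, Tendsto (f i) (𝓝[K] x) (𝓝 L)) ∧ f i x = 0)

/-- `𝒟`: the points of `closure K` at which some (extended) branch fails to be
locally Lipschitz. -/
def DSet (K : Set (Xs d)) (f : Fin n → Xs d → Ys m) : Set (Xs d) :=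
  {x ∈ closure K | ∃ i : Fin n,
    ¬ ∃ C : NNReal, ∃ t ∈ 𝓝[closure K] x, LipschitzOnWith C (f i) t}

/-- The joint bad set `ℬ ⊆ Y × closure K`. -/
def BadSet (K : Set (Xs d)) (f : Fin n → Xs d → Ys m) : Set (Zs m d) :=
  {p | projX p ∈ DSet K f ∪ closure (Unstable K f) ∨ projY p ∈ SigmaTilde K f (projX p)}

/-- `ρ(y, x) = dist((y, x), ℬ)` in the product Euclidean norm. -/
def rhoB (K : Set (Xs d)) (f : Fin n → Xs d → Ys m) (y : Ys m) (x : Xs d) : ℝ :=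
  Metric.infDist (ptYX y x) (BadSet K f)

/-- `ω(y, x) = ρ(y, x) / (1 + ρ(y, x))`. -/
def omegaB (K : Set (Xs d)) (f : Fin n → Xs d → Ys m) (y : Ys m) (x : Xs d) : ℝ :=
  rhoB K f y x / (1 + rhoB K f y x)

/-- The safe tube `𝒮(R, s)`. -/
def STube (K : Set (Xs d)) (f : Fin n → Xs d → Ys m) (R s : ℝ) : Set (Ys m × Xs d) :=
  {q | q.2 ∈ closure K ∧ ‖q.1‖ ≤ R ∧ s ≤ omegaB K f q.1 q.2}

/-- The set whose supremum is the safe-set profile `H₁(R, s)`. -/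
def H1set (K : Set (Xs d)) (f : Fin n → Xs d → Ys m) (P : Ys m → Xs d → Ys m)
    (R s : ℝ) : Set ℝ :=
  {r | ∃ y x z, (y, x) ∈ STube K f R s ∧ (y, z) ∈ STube K f R s ∧ x ≠ z ∧
       r = ‖P y x - P y z‖ / ‖x - z‖}

/-- The set whose supremum is the safe-set profile `H₂(R, s)`. -/
def H2set (K : Set (Xs d)) (f : Fin n → Xs d → Ys m) (P : Ys m → Xs d → Ys m)
    (R s : ℝ) : Set ℝ :=
  {r | ∃ y x, (y, x) ∈ STube K f R s ∧ r = ‖P y x‖}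

def H1 (K : Set (Xs d)) (f : Fin n → Xs d → Ys m) (P : Ys m → Xs d → Ys m) (R s : ℝ) : ℝ :=
  sSup (H1set K f P R s)

def H2 (K : Set (Xs d)) (f : Fin n → Xs d → Ys m) (P : Ys m → Xs d → Ys m) (R s : ℝ) : ℝ :=
  sSup (H2set K f P R s)

/-- `λ_R(s) = 1 / (H₁(R, s) + H₂(R, s) + 1)`. -/
def lamB (K : Set (Xs d)) (f : Fin n → Xs d → Ys m) (P : Ys m → Xs d → Ys m)
    (R s : ℝ) : ℝ :=
  1 / (H1 K f P R s + H2 K f P R s + 1)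

/-- `Θ_R(r) = ∫₀^r λ_R(s) ds`. -/
def ThetaB (K : Set (Xs d)) (f : Fin n → Xs d → Ys m) (P : Ys m → Xs d → Ys m)
    (R r : ℝ) : ℝ :=
  ∫ s in (0:ℝ)..r, lamB K f P R s

/-- The damping factor `η(y, x)`. -/
def etaB (K : Set (Xs d)) (f : Fin n → Xs d → Ys m) (P : Ys m → Xs d → Ys m)
    (y : Ys m) (x : Xs d) : ℝ :=
  ThetaB K f P (1 + ‖y‖) (omegaB K f y x) /
    (1 + ThetaB K f P (1 + ‖y‖) (omegaB K f y x))

/-- The recurrent operator `g(y, x) = (1 − η(y, x)) y + η(y, x) P_y(x)`. -/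
def gB (K : Set (Xs d)) (f : Fin n → Xs d → Ys m) (P : Ys m → Xs d → Ys m)
    (y : Ys m) (x : Xs d) : Ys m :=
  (1 - etaB K f P y x) • y + etaB K f P y x • P y x

/-!
Fix `y`. Off the bad set the branches are Lipschitz, and since no switching point lies within
`ρ(y₀, x₀)` of `y₀`, the nearest branch is separated from every other one by a gap proportional to
`ρ`; so the priority selector can only jump by an amount controlled by the branch moduli, and
`P_y` is locally bounded and locally Lipschitz there. Compactness of the safe tubes makes the
profiles `H₁, H₂` finite and antitone in `s`, so `λ_R` is monotone and
`Θ(b) - Θ(a) ≤ λ(b) (b - a)`. As `ω` is `1`-Lipschitz, in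
`g(y, x) - g(y, z) = (η x - η z) (P_y z - y) + η x (P_y x - P_y z)` the factor `λ` exactly
compensates `H₂` in the first term and `H₁` in the second, giving the constant `2 + ‖y‖`.
-/
section NearestPoint

variable {ι E : Type*} [SeminormedAddCommGroup E]

def IsNearest (a : ι → E) (y : E) (k : ι) : Prop :=
  ∀ l, ‖y - a k‖ ≤ ‖y - a l‖

lemma IsNearest.of_eq {a : ι → E} {y : E} {k k' : ι} (hk : IsNearest a y k) (h : a k = a k') :
    IsNearest a y k' := by
  simpa only [IsNearest, h] using hk

lemma isClosed_setOf_isNearest (a : ι → E) (k : ι) : IsClosed {y | IsNearest a y k} := by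
  simp only [IsNearest, ofPred_forall]
  exact isClosed_iInter fun l => isClosed_le (by fun_prop) (by fun_prop)

lemma exists_isNearest [Finite ι] [Nonempty ι] (a : ι → E) (y : E) : ∃ k, IsNearest a y k :=
  Finite.exists_min fun l => ‖y - a l‖

/-- The Voronoi cells are closed and pairwise disjoint on the ball, which is connected. -/
lemma IsNearest.of_mem_closedBall [NormedSpace ℝ E] [Finite ι] {a : ι → E} {y y' : E} {ρ : ℝ}
    {k : ι} (hties : ∀ w ∈ closedBall y ρ, ∀ i j, IsNearest a w i → IsNearest a w j → a i = a j)
    (hk : IsNearest a y k) (hy' : y' ∈ closedBall y ρ) : IsNearest a y' k := by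
  have : Nonempty ι := ⟨k⟩
  set u := {w | IsNearest a w k}
  set v := ⋃ l : {l // a l ≠ a k}, {w | IsNearest a w l}
  have hv : IsClosed v := isClosed_iUnion_of_finite fun l => isClosed_setOf_isNearest a l
  have hcover : closedBall y ρ ⊆ u ∪ v := by
    intro w _
    obtain ⟨l, hl⟩ := exists_isNearest a w
    by_cases hlk : a l = a k
    · exact Or.inl (hl.of_eq hlk)
    · exact Or.inr (mem_iUnion.2 ⟨⟨l, hlk⟩, hl⟩)
  have hdisj : closedBall y ρ ∩ (u ∩ v) = ∅ := by
    refine eq_empty_of_forall_notMem fun w ⟨hw, hwk, hwv⟩ => ?_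
    obtain ⟨⟨l, hlk⟩, hwl⟩ := mem_iUnion.1 hwv
    exact hlk (hties w hw l k hwl hwk)
  have hy : y ∈ closedBall y ρ := mem_closedBall_self (dist_nonneg.trans hy')
  rcases isPreconnected_iff_subset_of_disjoint_closed.1 (convex_closedBall y ρ).isPreconnected
    u v (isClosed_setOf_isNearest a k) hv hcover hdisj with hu | hv
  · exact hu hy'
  · exact absurd hdisj (nonempty_iff_ne_empty.1 ⟨y, hy, hk, hv hy⟩)

lemma IsNearest.norm_sub_le {a b : ι → E} {y : E} {j k : ι} {ε M ρ : ℝ} (hρ : 0 < ρ)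
    (hj : IsNearest a y j) (hk : IsNearest b y k)
    (hab : ∀ i, ‖a i - b i‖ ≤ ε) (hM : ∀ i, ‖y - b i‖ ≤ M)
    (hgap : ρ * ‖b j - b k‖ ≤ ‖y - b j‖ ^ 2 - ‖y - b k‖ ^ 2) :
    ‖a j - b k‖ ≤ (1 + 4 * M / ρ) * ε := by
  have hM0 : 0 ≤ M := (norm_nonneg _).trans (hM j)
  have hdiff : ‖y - b j‖ - ‖y - b k‖ ≤ 2 * ε := by
    have := hj k
    have := norm_sub_le_norm_sub_add_norm_sub y (a j) (b j)
    have := norm_sub_le_norm_sub_add_norm_sub y (b k) (a k)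
    rw [norm_sub_rev (b k)] at this
    linarith [hab j, hab k]
  have hsq : ‖y - b j‖ ^ 2 - ‖y - b k‖ ^ 2 ≤ 2 * ε * (2 * M) := by
    rw [sq_sub_sq, mul_comm (2 * ε)]
    exact mul_le_mul (by linarith [hM j, hM k]) hdiff (by linarith [hk j]) (by positivity)
  have hjk : ‖b j - b k‖ ≤ 4 * M / ρ * ε := by
    rw [div_mul_eq_mul_div, le_div_iff₀ hρ]
    linarith
  calc ‖a j - b k‖ ≤ ‖a j - b j‖ + ‖b j - b k‖ := norm_sub_le_norm_sub_add_norm_sub _ _ _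
    _ ≤ ε + 4 * M / ρ * ε := add_le_add (hab j) hjk
    _ = (1 + 4 * M / ρ) * ε := by ring

end NearestPoint

/-- Moving `y` by `ρ` towards `a j` keeps `a k` nearest; expanding the squares gives the gap. -/
lemma IsNearest.two_mul_mul_norm_sub_le {ι E : Type*} [NormedAddCommGroup E]
    [InnerProductSpace ℝ E] [Finite ι] {a : ι → E} {y : E} {ρ : ℝ} {k : ι} (hρ : 0 ≤ ρ)
    (hties : ∀ w ∈ closedBall y ρ, ∀ i j, IsNearest a w i → IsNearest a w j → a i = a j)
    (hk : IsNearest a y k) (j : ι) :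
    2 * ρ * ‖a j - a k‖ ≤ ‖y - a j‖ ^ 2 - ‖y - a k‖ ^ 2 := by
  by_cases hjk : a j = a k
  · simp [hjk]
  set e := a j - a k
  have he : 0 < ‖e‖ := norm_pos_iff.2 (sub_ne_zero.2 hjk)
  set t := ρ / ‖e‖
  have hy' : y + t • e ∈ closedBall y ρ := by
    rw [mem_closedBall, dist_eq_norm, add_sub_cancel_left, norm_smul, Real.norm_eq_abs,
      abs_of_nonneg (div_nonneg hρ he.le), div_mul_cancel₀ _ he.ne']
  have hnear := hk.of_mem_closedBall hties hy' j
  have hsq := pow_le_pow_left₀ (norm_nonneg _) hnear 2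
  rw [show y + t • e - a k = (y - a k) + t • e by abel,
    show y + t • e - a j = (y - a j) + t • e by abel, norm_add_sq_real, norm_add_sq_real] at hsq
  have hinner : ⟪y - a k, t • e⟫ - ⟪y - a j, t • e⟫ = t * ‖e‖ ^ 2 := by
    rw [real_inner_smul_right, real_inner_smul_right, ← mul_sub, ← inner_sub_left,
      sub_sub_sub_cancel_left, real_inner_self_eq_norm_sq]
  have hte : t * ‖e‖ ^ 2 = ρ * ‖e‖ := by rw [sq, ← mul_assoc, div_mul_cancel₀ _ he.ne']
  linarith

lemma IsNearest.eq_of_mul_norm_sub_le {ι E : Type*} [NormedAddCommGroup E] {a : ι → E} {y : E}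
    {k k' : ι} {ρ : ℝ} (hρ : 0 < ρ) (hk : IsNearest a y k) (hk' : IsNearest a y k')
    (hgap : ρ * ‖a k - a k'‖ ≤ ‖y - a k‖ ^ 2 - ‖y - a k'‖ ^ 2) : a k = a k' := by
  rw [le_antisymm (hk k') (hk' k), sub_self, ← mul_zero ρ] at hgap
  exact sub_eq_zero.1 (norm_le_zero_iff.1 (le_of_mul_le_mul_left hgap hρ))

lemma exists_bound_lipschitz_of_dist_lt_of_isCompact {α β F : Type*} [PseudoMetricSpace α]
    [PseudoMetricSpace β] [SeminormedAddCommGroup F] {T : Set (α × β)} (hT : IsCompact T)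
    {g : α → β → F}
    (hloc : ∀ q ∈ T, ∃ r > 0, ∃ C, ∀ y x z, (y, x) ∈ T → (y, z) ∈ T → dist y q.1 < r →
      dist x q.2 < r → dist z q.2 < r → ‖g y x‖ ≤ C ∧ ‖g y x - g y z‖ ≤ C * dist x z) :
    ∃ C δ, 0 < δ ∧ ∀ y x z, (y, x) ∈ T → (y, z) ∈ T →
      ‖g y x‖ ≤ C ∧ (dist x z < δ → ‖g y x - g y z‖ ≤ C * dist x z) := by
  refine hT.induction_on (p := fun t => ∃ C δ, 0 < δ ∧ ∀ y x z, (y, x) ∈ t → (y, z) ∈ T →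
    ‖g y x‖ ≤ C ∧ (dist x z < δ → ‖g y x - g y z‖ ≤ C * dist x z))
    ⟨0, 1, one_pos, by simp⟩ (fun s t hst ⟨C, δ, hδ, h⟩ => ⟨C, δ, hδ, fun y x z hx hz =>
      h y x z (hst hx) hz⟩) ?_ ?_
  · rintro s t ⟨C, δ, hδ, hs⟩ ⟨C', δ', hδ', ht⟩
    refine ⟨max C C', min δ δ', lt_min hδ hδ', fun y x z hx hz => ?_⟩
    have hmono := mul_le_mul_of_nonneg_right (le_max_left C C') (dist_nonneg (x := x) (y := z))
    have hmono' := mul_le_mul_of_nonneg_right (le_max_right C C') (dist_nonneg (x := x) (y := z))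
    rcases hx with hx | hx
    · exact ⟨(hs y x z hx hz).1.trans (le_max_left _ _), fun h =>
        ((hs y x z hx hz).2 (h.trans_le (min_le_left _ _))).trans hmono⟩
    · exact ⟨(ht y x z hx hz).1.trans (le_max_right _ _), fun h =>
        ((ht y x z hx hz).2 (h.trans_le (min_le_right _ _))).trans hmono'⟩
  · intro q hq
    obtain ⟨r, hr, C, hC⟩ := hloc q hq
    refine ⟨T ∩ ball q (r / 2), inter_mem_nhdsWithin T (ball_mem_nhds q (half_pos hr)),
      C, r / 2, half_pos hr, fun y x z ⟨hx, hxq⟩ hz => ?_⟩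
    rw [mem_ball, Prod.dist_eq, max_lt_iff] at hxq
    have hy : dist y q.1 < r := by linarith
    have hxr : dist x q.2 < r := by linarith
    refine ⟨(hC y x x hx hx hy hxr hxr).1, fun hxz => (hC y x z hx hz hy hxr ?_).2⟩
    linarith [dist_triangle_left z q.2 x]

lemma exists_bound_lipschitz_of_isCompact {α β F : Type*} [PseudoMetricSpace α]
    [PseudoMetricSpace β] [SeminormedAddCommGroup F] {T : Set (α × β)} (hT : IsCompact T)
    {g : α → β → F}
    (hloc : ∀ q ∈ T, ∃ r > 0, ∃ C, ∀ y x z, (y, x) ∈ T → (y, z) ∈ T → dist y q.1 < r →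
      dist x q.2 < r → dist z q.2 < r → ‖g y x‖ ≤ C ∧ ‖g y x - g y z‖ ≤ C * dist x z) :
    ∃ C, ∀ y x z, (y, x) ∈ T → (y, z) ∈ T → ‖g y x‖ ≤ C ∧ ‖g y x - g y z‖ ≤ C * dist x z := by
  obtain ⟨C, δ, hδ, hC⟩ := exists_bound_lipschitz_of_dist_lt_of_isCompact hT hloc
  refine ⟨max C (2 * C / δ), fun y x z hx hz => ⟨(hC y x z hx hz).1.trans (le_max_left _ _), ?_⟩⟩
  have hC0 : 0 ≤ C := (norm_nonneg _).trans (hC y x z hx hz).1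
  rcases lt_or_ge (dist x z) δ with hxz | hxz
  · exact ((hC y x z hx hz).2 hxz).trans
      (mul_le_mul_of_nonneg_right (le_max_left _ _) dist_nonneg)
  · calc ‖g y x - g y z‖ ≤ C + C :=
          (norm_sub_le _ _).trans (add_le_add (hC y x z hx hz).1 (hC y z x hz hx).1)
      _ = 2 * C / δ * δ := by field_simp; ring
      _ ≤ max C (2 * C / δ) * dist x z :=
          mul_le_mul (le_max_right _ _) hxz hδ.le (hC0.trans (le_max_left _ _))

section MonotoneIntegral

variable {u : ℝ → ℝ}

lemma intervalIntegrable_of_monotoneOn_Ioi (hu : MonotoneOn u (Ioi 0)) (hu0 : ∀ t, 0 ≤ u t)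
    {b : ℝ} (hb : 0 ≤ b) : IntervalIntegrable u volume 0 b := by
  rw [intervalIntegrable_iff_integrableOn_Ioc_of_le hb]
  refine Integrable.of_bound (aemeasurable_restrict_of_monotoneOn measurableSet_Ioc
      (hu.mono Ioc_subset_Ioi_self)).aestronglyMeasurable (u b) ?_
  filter_upwards [ae_restrict_mem measurableSet_Ioc] with t ht
  rw [Real.norm_of_nonneg (hu0 t)]
  exact hu ht.1 (ht.1.trans_le ht.2) ht.2

lemma integral_sub_integral_nonneg_of_monotoneOn_Ioi (hu : MonotoneOn u (Ioi 0))
    (hu0 : ∀ t, 0 ≤ u t) {a b : ℝ} (ha : 0 ≤ a) (hab : a ≤ b) :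
    0 ≤ (∫ t in 0..b, u t) - ∫ t in 0..a, u t := by
  rw [intervalIntegral.integral_interval_sub_left
    (intervalIntegrable_of_monotoneOn_Ioi hu hu0 (ha.trans hab))
    (intervalIntegrable_of_monotoneOn_Ioi hu hu0 ha)]
  exact intervalIntegral.integral_nonneg hab fun t _ => hu0 t

lemma integral_sub_integral_le_of_monotoneOn_Ioi (hu : MonotoneOn u (Ioi 0))
    (hu0 : ∀ t, 0 ≤ u t) {a b : ℝ} (ha : 0 ≤ a) (hab : a ≤ b) :
    (∫ t in 0..b, u t) - ∫ t in 0..a, u t ≤ u b * (b - a) := by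
  have hb := ha.trans hab
  have hint : IntervalIntegrable u volume a b :=
    (intervalIntegrable_of_monotoneOn_Ioi hu hu0 ha).symm.trans
      (intervalIntegrable_of_monotoneOn_Ioi hu hu0 hb)
  rw [intervalIntegral.integral_interval_sub_left
    (intervalIntegrable_of_monotoneOn_Ioi hu hu0 hb)
    (intervalIntegrable_of_monotoneOn_Ioi hu hu0 ha)]
  calc ∫ t in a..b, u t ≤ ∫ _ in a..b, u b :=
        intervalIntegral.integral_mono_on_of_le_Ioo hab hint intervalIntegrable_const
          fun t ht => hu (ha.trans_lt ht.1) (ha.trans_lt (ht.1.trans ht.2)) ht.2.le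
    _ = u b * (b - a) := by rw [intervalIntegral.integral_const, smul_eq_mul, mul_comm]

end MonotoneIntegral

section BadSet

variable {K : Set (Xs d)} {f : Fin n → Xs d → Ys m}

lemma dist_ptYX_ptYX_le (y y' : Ys m) (x x' : Xs d) :
    dist (ptYX y x) (ptYX y' x') ≤ dist y y' + dist x x' := by
  rw [WithLp.prod_dist_eq_of_L2]
  change √(dist y y' ^ 2 + dist x x' ^ 2) ≤ _
  rw [Real.sqrt_le_iff]
  exact ⟨by positivity,
    by nlinarith [dist_nonneg (x := y) (y := y'), dist_nonneg (x := x) (y := x')]⟩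

lemma dist_ptYX_ptYX_left (y : Ys m) (x x' : Xs d) : dist (ptYX y x) (ptYX y x') = dist x x' := by
  rw [WithLp.prod_dist_eq_of_L2]
  change √(dist y y ^ 2 + dist x x' ^ 2) = _
  simp [Real.sqrt_sq dist_nonneg]

lemma rhoB_nonneg (y : Ys m) (x : Xs d) : 0 ≤ rhoB K f y x := infDist_nonneg

lemma omegaB_nonneg (y : Ys m) (x : Xs d) : 0 ≤ omegaB K f y x := by
  have := rhoB_nonneg (K := K) (f := f) y x
  unfold omegaB; positivity

lemma omegaB_le_one (y : Ys m) (x : Xs d) : omegaB K f y x ≤ 1 :=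
  div_le_one_of_le₀ (by linarith) (by linarith [rhoB_nonneg (K := K) (f := f) y x])

lemma omegaB_le_rhoB (y : Ys m) (x : Xs d) : omegaB K f y x ≤ rhoB K f y x :=
  div_le_self (rhoB_nonneg y x) (by linarith [rhoB_nonneg (K := K) (f := f) y x])

lemma abs_div_one_add_sub_div_one_add_le {a b : ℝ} (ha : 0 ≤ a) (hb : 0 ≤ b) :
    |a / (1 + a) - b / (1 + b)| ≤ |a - b| := by
  have hab : a / (1 + a) - b / (1 + b) = (a - b) / ((1 + a) * (1 + b)) := by
    field_simp; ring
  rw [hab, abs_div, abs_of_pos (by positivity : (0 : ℝ) < (1 + a) * (1 + b))]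
  exact div_le_self (abs_nonneg _) (by nlinarith)

lemma abs_omegaB_sub_omegaB_le (y : Ys m) (x z : Xs d) :
    |omegaB K f y x - omegaB K f y z| ≤ dist x z := by
  refine (abs_div_one_add_sub_div_one_add_le (rhoB_nonneg y x) (rhoB_nonneg y z)).trans ?_
  rw [← dist_ptYX_ptYX_left y x z, ← Real.dist_eq]
  simpa [rhoB] using (lipschitz_infDist_pt (BadSet K f)).dist_le_mul (ptYX y x) (ptYX y z)

lemma continuous_omegaB : Continuous fun q : Ys m × Xs d => omegaB K f q.1 q.2 := by
  have hρ : Continuous fun q : Ys m × Xs d => rhoB K f q.1 q.2 :=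
    (lipschitz_infDist_pt _).continuous.comp
      (WithLp.prodContinuousLinearEquiv 2 ℝ (Ys m) (Xs d)).symm.continuous
  exact hρ.div (continuous_const.add hρ) fun q => by
    linarith [rhoB_nonneg (K := K) (f := f) q.1 q.2]

lemma ptYX_notMem_badSet {y₀ y : Ys m} {x₀ x : Xs d}
    (h : dist y y₀ + dist x x₀ < rhoB K f y₀ x₀) : ptYX y x ∉ BadSet K f :=
  notMem_of_dist_lt_infDist ((dist_ptYX_ptYX_le y₀ y x₀ x).trans_lt
    (by rwa [dist_comm y₀, dist_comm x₀]))

lemma notMem_DSet_of_rhoB_pos {y₀ : Ys m} {x₀ : Xs d} (h : 0 < rhoB K f y₀ x₀) :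
    x₀ ∉ DSet K f := fun hD =>
  ptYX_notMem_badSet (y₀ := y₀) (y := y₀) (x₀ := x₀) (x := x₀) (by simpa using h)
    (Or.inl (Or.inl hD))

lemma notMem_Sigma0_of_dist_lt {y₀ y : Ys m} {x₀ z : Xs d} (hz : z ∈ K)
    (h : dist y y₀ + dist z x₀ < rhoB K f y₀ x₀) : y ∉ Sigma0 f z := fun hmem =>
  ptYX_notMem_badSet h (Or.inr (subset_closure ⟨hz, hmem⟩))

end BadSet

section Local

variable {K : Set (Xs d)} {f : Fin n → Xs d → Ys m} {P : Ys m → Xs d → Ys m}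

lemma IsPrioritySelector.exists_isNearest (hP : IsPrioritySelector f P) (y : Ys m) (x : Xs d) :
    ∃ i, P y x = f i x ∧ IsNearest (f · x) y i := by
  obtain ⟨i, hi, hnear, -⟩ := hP y x
  exact ⟨i, hi, hnear⟩

lemma exists_lipschitzOnWith_of_notMem_DSet {x₀ : Xs d} (hx₀ : x₀ ∈ closure K)
    (hD : x₀ ∉ DSet K f) :
    ∃ r > 0, ∃ L : ℝ≥0, ∀ i, LipschitzOnWith L (f i) (closure K ∩ ball x₀ r) := by
  have hloc : ∀ i, ∃ C : ℝ≥0, ∃ t ∈ 𝓝[closure K] x₀, LipschitzOnWith C (f i) t := by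
    by_contra h
    exact hD ⟨hx₀, not_forall.1 h⟩
  choose C t ht hC using hloc
  obtain ⟨r, hr, hsub⟩ := mem_nhdsWithin_iff.1 (iInter_mem.2 ht)
  refine ⟨r, hr, Finset.univ.sup C, fun i =>
    ((hC i).mono fun w hw => ?_).weaken (Finset.le_sup (Finset.mem_univ i))⟩
  exact mem_iInter.1 (hsub ⟨hw.2, hw.1⟩) i

lemma norm_sub_apply_le_of_lipschitzOnWith {s : Set (Xs d)} {L : ℝ≥0}
    (hL : ∀ i, LipschitzOnWith L (f i) s) {x₀ w : Xs d} (hx₀ : x₀ ∈ s) (hw : w ∈ s)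
    (y₀ y : Ys m) (i : Fin n) :
    ‖y - f i w‖ ≤ dist y y₀ + ∑ j, ‖y₀ - f j x₀‖ + L * dist w x₀ := by
  have hi : ‖y₀ - f i x₀‖ ≤ ∑ j, ‖y₀ - f j x₀‖ :=
    Finset.single_le_sum (fun j _ => norm_nonneg (y₀ - f j x₀)) (Finset.mem_univ i)
  have hlip := (hL i).dist_le_mul w hw x₀ hx₀
  rw [dist_eq_norm, norm_sub_rev] at hlip
  calc ‖y - f i w‖ ≤ ‖y - y₀‖ + (‖y₀ - f i x₀‖ + ‖f i x₀ - f i w‖) :=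
        (norm_sub_le_norm_sub_add_norm_sub _ y₀ _).trans
          (add_le_add_right (norm_sub_le_norm_sub_add_norm_sub _ _ _) _)
    _ ≤ dist y y₀ + ∑ j, ‖y₀ - f j x₀‖ + L * dist w x₀ := by
        rw [dist_eq_norm]; linarith

/-- No point of `Σ°(z)` lies within `ρ(y₀, x₀) / 2` of `y`. -/
lemma rhoB_mul_norm_sub_le_of_mem {y₀ y : Ys m} {x₀ z : Xs d} (hz : z ∈ K)
    (hy : dist y y₀ < rhoB K f y₀ x₀ / 4) (hzx : dist z x₀ < rhoB K f y₀ x₀ / 4) {k : Fin n}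
    (hk : IsNearest (f · z) y k) (j : Fin n) :
    rhoB K f y₀ x₀ * ‖f j z - f k z‖ ≤ ‖y - f j z‖ ^ 2 - ‖y - f k z‖ ^ 2 := by
  have hties : ∀ w ∈ closedBall y (rhoB K f y₀ x₀ / 2), ∀ i i',
      IsNearest (f · z) w i → IsNearest (f · z) w i' → f i z = f i' z := by
    intro w hw i i' hi hi'
    by_contra hne
    refine notMem_Sigma0_of_dist_lt (y₀ := y₀) (x₀ := x₀) hz ?_
      ⟨i, i', hne, le_antisymm (hi i') (hi' i), hi⟩
    linarith [dist_triangle w y y₀, mem_closedBall.1 hw]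
  have := hk.two_mul_mul_norm_sub_le (by linarith [rhoB_nonneg (K := K) (f := f) y₀ x₀]) hties j
  linarith

lemma rhoB_mul_norm_sub_le_of_mem_closure (hP : IsPrioritySelector f P) {y₀ y : Ys m}
    {x₀ z : Xs d} {r : ℝ} (hr : r ≤ rhoB K f y₀ x₀ / 4)
    (hcont : ∀ i, ContinuousOn (f i) (closure K ∩ ball x₀ r)) (hy : dist y y₀ < r)
    (hz : z ∈ closure K ∩ ball x₀ r) {k : Fin n} (hk : IsNearest (f · z) y k) (j : Fin n) :
    rhoB K f y₀ x₀ * ‖f j z - f k z‖ ≤ ‖y - f j z‖ ^ 2 - ‖y - f k z‖ ^ 2 := by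
  set S : Fin n → Set (Xs d) := fun l => {w ∈ K ∩ ball x₀ r | IsNearest (f · w) y l ∧
    ∀ j, rhoB K f y₀ x₀ * ‖f j w - f l w‖ ≤ ‖y - f j w‖ ^ 2 - ‖y - f l w‖ ^ 2}
  have hρ : 0 < rhoB K f y₀ x₀ := by linarith [dist_nonneg (x := y) (y := y₀)]
  have hcover : K ∩ ball x₀ r ⊆ ⋃ l, S l := by
    intro w hw
    obtain ⟨l, -, hl⟩ := hP.exists_isNearest y w
    exact mem_iUnion.2 ⟨l, hw, hl, rhoB_mul_norm_sub_le_of_mem hw.1 (by linarith)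
      (by linarith [mem_ball.1 hw.2]) hl⟩
  have hzS : z ∈ ⋃ l, closure (S l) := by
    rw [← closure_iUnion_of_finite]
    refine closure_mono hcover ?_
    simpa only [inter_comm] using isOpen_ball.inter_closure ⟨hz.2, hz.1⟩
  obtain ⟨k', hk'⟩ := mem_iUnion.1 hzS
  have hSsub : S k' ⊆ closure K ∩ ball x₀ r := fun w hw => ⟨subset_closure hw.1.1, hw.1.2⟩
  have hf : ∀ i, ContinuousWithinAt (f i) (S k') z := fun i => (hcont i z hz).mono hSsub
  have hdist : ∀ i, ContinuousWithinAt (fun w => ‖y - f i w‖) (S k') z := fun i =>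
    (continuousWithinAt_const.sub (hf i)).norm
  have hnear : IsNearest (f · z) y k' := fun l =>
    ContinuousWithinAt.closure_le hk' (hdist k') (hdist l) fun w hw => hw.2.1 l
  have hgap : ∀ j, rhoB K f y₀ x₀ * ‖f j z - f k' z‖ ≤ ‖y - f j z‖ ^ 2 - ‖y - f k' z‖ ^ 2 :=
    fun j => ContinuousWithinAt.closure_le hk'
      (continuousWithinAt_const.mul ((hf j).sub (hf k')).norm)
      (((hdist j).pow 2).sub ((hdist k').pow 2)) fun w hw => hw.2.2 j
  rw [hk.eq_of_mul_norm_sub_le hρ hnear (hgap k)]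
  exact hgap j

lemma exists_bound_lipschitz_near (hP : IsPrioritySelector f P) {y₀ : Ys m} {x₀ : Xs d}
    (hx₀ : x₀ ∈ closure K) (hρ : 0 < rhoB K f y₀ x₀) :
    ∃ r > 0, ∃ C, ∀ y x z, x ∈ closure K → z ∈ closure K → dist y y₀ < r → dist x x₀ < r →
      dist z x₀ < r → ‖P y x‖ ≤ C ∧ ‖P y x - P y z‖ ≤ C * dist x z := by
  set δ := rhoB K f y₀ x₀
  obtain ⟨r₁, hr₁, L, hL⟩ :=
    exists_lipschitzOnWith_of_notMem_DSet hx₀ (notMem_DSet_of_rhoB_pos hρ)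
  set r := min r₁ (δ / 4)
  have hr : 0 < r := lt_min hr₁ (by positivity)
  have hLr : ∀ i, LipschitzOnWith L (f i) (closure K ∩ ball x₀ r) := fun i =>
    (hL i).mono (inter_subset_inter_right _ (ball_subset_ball (min_le_left _ _)))
  set M := r + ∑ j, ‖y₀ - f j x₀‖ + L * r
  have hM0 : 0 ≤ M := by positivity
  have hM : ∀ y w i, dist y y₀ < r → w ∈ closure K ∩ ball x₀ r → ‖y - f i w‖ ≤ M := by
    intro y w i hy hw
    have := norm_sub_apply_le_of_lipschitzOnWith hLr ⟨hx₀, mem_ball_self hr⟩ hw y₀ y i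
    have := mul_le_mul_of_nonneg_left (mem_ball.1 hw.2).le L.coe_nonneg
    linarith
  have hL0 : 0 ≤ (1 + 4 * M / δ) * L := by positivity
  refine ⟨r, hr, ‖y₀‖ + r + M + (1 + 4 * M / δ) * L, fun y x z hx hz hy hxr hzr => ?_⟩
  obtain ⟨j, hPj, hj⟩ := hP.exists_isNearest y x
  obtain ⟨k, hPk, hk⟩ := hP.exists_isNearest y z
  constructor
  · have hy' : ‖y‖ ≤ ‖y₀‖ + r := by
      linarith [norm_le_norm_add_norm_sub' y y₀, dist_eq_norm y y₀]
    have := norm_sub_le y (y - f j x)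
    rw [sub_sub_cancel] at this
    rw [hPj]
    linarith [hM y x j hy ⟨hx, hxr⟩]
  · have hlip := hj.norm_sub_le hρ hk (ε := L * dist x z)
      (fun i => by rw [← dist_eq_norm]; exact (hLr i).dist_le_mul x ⟨hx, hxr⟩ z ⟨hz, hzr⟩)
      (fun i => hM y z i hy ⟨hz, hzr⟩)
      (rhoB_mul_norm_sub_le_of_mem_closure hP (min_le_right _ _)
        (fun i => (hLr i).continuousOn) hy ⟨hz, hzr⟩ hk j)
    rw [hPj, hPk]
    refine hlip.trans ?_
    rw [← mul_assoc]
    exact mul_le_mul_of_nonneg_right (by linarith [norm_nonneg y₀]) dist_nonneg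

end Local

section Tube

variable {K : Set (Xs d)} {f : Fin n → Xs d → Ys m} {P : Ys m → Xs d → Ys m}

lemma isCompact_STube (hK : IsBounded K) (R s : ℝ) : IsCompact (STube K f R s) := by
  rw [isCompact_iff_isClosed_bounded]
  constructor
  · exact (isClosed_closure.preimage continuous_snd).inter
      ((isClosed_le (continuous_norm.comp continuous_fst) continuous_const).inter
        (isClosed_le continuous_const continuous_omegaB))
  · refine ((isBounded_closedBall (x := (0 : Ys m)) (r := R)).prod hK.closure).subset ?_
    intro q hq
    exact ⟨mem_closedBall_zero_iff.2 hq.2.1, hq.1⟩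

lemma exists_bound_lipschitz_STube (hK : IsBounded K) (hP : IsPrioritySelector f P) (R : ℝ)
    {s : ℝ} (hs : 0 < s) :
    ∃ C, ∀ y x z, (y, x) ∈ STube K f R s → (y, z) ∈ STube K f R s →
      ‖P y x‖ ≤ C ∧ ‖P y x - P y z‖ ≤ C * dist x z := by
  refine exists_bound_lipschitz_of_isCompact (isCompact_STube hK R s) fun q hq => ?_
  obtain ⟨r, hr, C, hC⟩ := exists_bound_lipschitz_near hP hq.1
    (hs.trans_le (hq.2.2.trans (omegaB_le_rhoB q.1 q.2)))
  exact ⟨r, hr, C, fun y x z hx hz => hC y x z hx.1 hz.1⟩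

end Tube

section Profiles

variable {K : Set (Xs d)} {f : Fin n → Xs d → Ys m} {P : Ys m → Xs d → Ys m} {R s : ℝ}
  {y : Ys m} {x z : Xs d}

lemma H1_nonneg : 0 ≤ H1 K f P R s :=
  Real.sSup_nonneg (by rintro _ ⟨y, x, z, -, -, -, rfl⟩; positivity)

lemma H2_nonneg : 0 ≤ H2 K f P R s :=
  Real.sSup_nonneg (by rintro _ ⟨y, x, -, rfl⟩; positivity)

lemma bddAbove_H1set (hK : IsBounded K) (hP : IsPrioritySelector f P) (hs : 0 < s) :
    BddAbove (H1set K f P R s) := by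
  obtain ⟨C, hC⟩ := exists_bound_lipschitz_STube hK hP R hs
  refine ⟨C, ?_⟩
  rintro _ ⟨y, x, z, hx, hz, hxz, rfl⟩
  rw [div_le_iff₀ (norm_pos_iff.2 (sub_ne_zero.2 hxz)), ← dist_eq_norm x z]
  exact (hC y x z hx hz).2

lemma bddAbove_H2set (hK : IsBounded K) (hP : IsPrioritySelector f P) (hs : 0 < s) :
    BddAbove (H2set K f P R s) := by
  obtain ⟨C, hC⟩ := exists_bound_lipschitz_STube hK hP R hs
  refine ⟨C, ?_⟩
  rintro _ ⟨y, x, hx, rfl⟩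
  exact (hC y x x hx hx).1

lemma norm_sub_le_H1_mul (hK : IsBounded K) (hP : IsPrioritySelector f P) (hs : 0 < s)
    (hx : (y, x) ∈ STube K f R s) (hz : (y, z) ∈ STube K f R s) :
    ‖P y x - P y z‖ ≤ H1 K f P R s * dist x z := by
  rcases eq_or_ne x z with rfl | hxz
  · simp
  · rw [dist_eq_norm, ← div_le_iff₀ (norm_pos_iff.2 (sub_ne_zero.2 hxz))]
    exact le_csSup (bddAbove_H1set hK hP hs) ⟨y, x, z, hx, hz, hxz, rfl⟩

lemma norm_le_H2 (hK : IsBounded K) (hP : IsPrioritySelector f P) (hs : 0 < s)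
    (hx : (y, x) ∈ STube K f R s) : ‖P y x‖ ≤ H2 K f P R s :=
  le_csSup (bddAbove_H2set hK hP hs) ⟨y, x, hx, rfl⟩

lemma STube_anti {s' : ℝ} (hss : s ≤ s') : STube K f R s' ⊆ STube K f R s :=
  fun _ hq => ⟨hq.1, hq.2.1, hss.trans hq.2.2⟩

lemma antitoneOn_H1 (hK : IsBounded K) (hP : IsPrioritySelector f P) :
    AntitoneOn (H1 K f P R) (Ioi 0) := by
  intro s hs s' _ hss
  refine Real.sSup_le ?_ H1_nonneg
  rintro _ ⟨y, x, z, hx, hz, hxz, rfl⟩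
  exact le_csSup (bddAbove_H1set hK hP hs)
    ⟨y, x, z, STube_anti hss hx, STube_anti hss hz, hxz, rfl⟩

lemma antitoneOn_H2 (hK : IsBounded K) (hP : IsPrioritySelector f P) :
    AntitoneOn (H2 K f P R) (Ioi 0) := by
  intro s hs s' _ hss
  refine Real.sSup_le ?_ H2_nonneg
  rintro _ ⟨y, x, hx, rfl⟩
  exact le_csSup (bddAbove_H2set hK hP hs) ⟨y, x, STube_anti hss hx, rfl⟩

lemma H1_add_H2_add_one_pos : 0 < H1 K f P R s + H2 K f P R s + 1 := by
  linarith [H1_nonneg (K := K) (f := f) (P := P) (R := R) (s := s),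
    H2_nonneg (K := K) (f := f) (P := P) (R := R) (s := s)]

lemma lamB_pos : 0 < lamB K f P R s := one_div_pos.2 H1_add_H2_add_one_pos

lemma lamB_mul_eq_one : lamB K f P R s * (H1 K f P R s + H2 K f P R s + 1) = 1 :=
  one_div_mul_cancel H1_add_H2_add_one_pos.ne'

lemma monotoneOn_lamB (hK : IsBounded K) (hP : IsPrioritySelector f P) :
    MonotoneOn (lamB K f P R) (Ioi 0) := fun s hs s' hs' hss =>
  one_div_le_one_div_of_le H1_add_H2_add_one_pos <| by
    linarith [antitoneOn_H1 hK hP (R := R) hs hs' hss, antitoneOn_H2 hK hP (R := R) hs hs' hss]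

lemma ThetaB_sub_ThetaB_nonneg (hK : IsBounded K) (hP : IsPrioritySelector f P) {a b : ℝ}
    (ha : 0 ≤ a) (hab : a ≤ b) : 0 ≤ ThetaB K f P R b - ThetaB K f P R a :=
  integral_sub_integral_nonneg_of_monotoneOn_Ioi (monotoneOn_lamB hK hP)
    (fun _ => lamB_pos.le) ha hab

lemma ThetaB_sub_ThetaB_le (hK : IsBounded K) (hP : IsPrioritySelector f P) {a b : ℝ}
    (ha : 0 ≤ a) (hab : a ≤ b) :
    ThetaB K f P R b - ThetaB K f P R a ≤ lamB K f P R b * (b - a) :=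
  integral_sub_integral_le_of_monotoneOn_Ioi (monotoneOn_lamB hK hP)
    (fun _ => lamB_pos.le) ha hab

lemma ThetaB_zero : ThetaB K f P R 0 = 0 := intervalIntegral.integral_same

lemma ThetaB_nonneg (hK : IsBounded K) (hP : IsPrioritySelector f P) {a : ℝ} (ha : 0 ≤ a) :
    0 ≤ ThetaB K f P R a := by
  simpa [ThetaB_zero] using ThetaB_sub_ThetaB_nonneg (R := R) hK hP le_rfl ha

lemma abs_etaB_sub_etaB_le (hK : IsBounded K) (hP : IsPrioritySelector f P)
    (hxz : omegaB K f y x ≤ omegaB K f y z) :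
    |etaB K f P y x - etaB K f P y z| ≤
      lamB K f P (1 + ‖y‖) (omegaB K f y z) * (omegaB K f y z - omegaB K f y x) := by
  have hx0 := omegaB_nonneg (K := K) (f := f) y x
  have hΘ := ThetaB_sub_ThetaB_nonneg (R := 1 + ‖y‖) hK hP hx0 hxz
  refine (abs_div_one_add_sub_div_one_add_le (ThetaB_nonneg hK hP hx0)
    (ThetaB_nonneg hK hP (hx0.trans hxz))).trans ?_
  rw [abs_sub_comm, abs_of_nonneg hΘ]
  exact ThetaB_sub_ThetaB_le hK hP hx0 hxz

lemma etaB_nonneg (hK : IsBounded K) (hP : IsPrioritySelector f P) : 0 ≤ etaB K f P y x := by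
  have := ThetaB_nonneg (R := 1 + ‖y‖) hK hP (omegaB_nonneg (K := K) (f := f) y x)
  unfold etaB; positivity

lemma etaB_le (hK : IsBounded K) (hP : IsPrioritySelector f P) :
    etaB K f P y x ≤ lamB K f P (1 + ‖y‖) (omegaB K f y x) * omegaB K f y x := by
  have hx0 := omegaB_nonneg (K := K) (f := f) y x
  have hΘ := ThetaB_sub_ThetaB_le (R := 1 + ‖y‖) hK hP le_rfl hx0
  rw [ThetaB_zero, sub_zero, sub_zero] at hΘ
  have hΘ0 := ThetaB_nonneg (R := 1 + ‖y‖) hK hP hx0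
  exact (div_le_self hΘ0 (by linarith)).trans hΘ

lemma abs_etaB_sub_etaB_mul_norm_le (hK : IsBounded K) (hP : IsPrioritySelector f P)
    (hz : z ∈ closure K) (hxz : omegaB K f y x ≤ omegaB K f y z) :
    |etaB K f P y x - etaB K f P y z| * ‖P y z - y‖ ≤ (1 + ‖y‖) * dist x z := by
  have hη := abs_etaB_sub_etaB_le hK hP hxz
  have hba : omegaB K f y z - omegaB K f y x ≤ dist x z :=
    (neg_le_abs _).trans_eq' (by ring) |>.trans (abs_omegaB_sub_omegaB_le y x z)
  set b := omegaB K f y z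
  rcases (omegaB_nonneg y z).eq_or_lt with hb | hb
  · have hab : b - omegaB K f y x = 0 := by linarith [omegaB_nonneg (K := K) (f := f) y x]
    rw [hab, mul_zero] at hη
    rw [abs_nonpos_iff.1 hη, abs_zero, zero_mul]
    positivity
  have hzT : (y, z) ∈ STube K f (1 + ‖y‖) b := ⟨hz, by linarith [norm_nonneg y], le_rfl⟩
  have hPz : ‖P y z - y‖ ≤ H2 K f P (1 + ‖y‖) b + ‖y‖ :=
    (norm_sub_le _ _).trans (add_le_add (norm_le_H2 hK hP hb hzT) le_rfl)
  have hlam : lamB K f P (1 + ‖y‖) b * ‖P y z - y‖ ≤ 1 + ‖y‖ := by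
    have h1 := H1_nonneg (K := K) (f := f) (P := P) (R := 1 + ‖y‖) (s := b)
    have h2 := H2_nonneg (K := K) (f := f) (P := P) (R := 1 + ‖y‖) (s := b)
    calc lamB K f P (1 + ‖y‖) b * ‖P y z - y‖
        ≤ lamB K f P (1 + ‖y‖) b * ((H1 K f P (1 + ‖y‖) b + H2 K f P (1 + ‖y‖) b + 1) *
          (1 + ‖y‖)) :=
          mul_le_mul_of_nonneg_left (hPz.trans (by nlinarith [norm_nonneg y])) lamB_pos.le
      _ = 1 + ‖y‖ := by rw [← mul_assoc, lamB_mul_eq_one, one_mul]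
  calc |etaB K f P y x - etaB K f P y z| * ‖P y z - y‖
      ≤ lamB K f P (1 + ‖y‖) b * (b - omegaB K f y x) * ‖P y z - y‖ :=
        mul_le_mul_of_nonneg_right hη (norm_nonneg _)
    _ = lamB K f P (1 + ‖y‖) b * ‖P y z - y‖ * (b - omegaB K f y x) := by ring
    _ ≤ (1 + ‖y‖) * dist x z := mul_le_mul hlam hba (by linarith) (by positivity)

lemma etaB_mul_norm_sub_le (hK : IsBounded K) (hP : IsPrioritySelector f P)
    (hx : x ∈ closure K) (hz : z ∈ closure K) (hxz : omegaB K f y x ≤ omegaB K f y z) :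
    etaB K f P y x * ‖P y x - P y z‖ ≤ dist x z := by
  have hη := etaB_le (P := P) hK hP (y := y) (x := x)
  rcases (omegaB_nonneg (K := K) (f := f) y x).eq_or_lt with ha | ha
  · rw [← ha, mul_zero] at hη
    nlinarith [etaB_nonneg (P := P) hK hP (y := y) (x := x), norm_nonneg (P y x - P y z),
      dist_nonneg (x := x) (y := z)]
  set a := omegaB K f y x
  have hR : ‖y‖ ≤ 1 + ‖y‖ := by linarith
  have hH1 := norm_sub_le_H1_mul hK hP ha (⟨hx, hR, le_rfl⟩ : (y, x) ∈ STube K f (1 + ‖y‖) a)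
    ⟨hz, hR, hxz⟩
  have hlam : lamB K f P (1 + ‖y‖) a * H1 K f P (1 + ‖y‖) a ≤ 1 := by
    have := lamB_mul_eq_one (K := K) (f := f) (P := P) (R := 1 + ‖y‖) (s := a)
    nlinarith [H2_nonneg (K := K) (f := f) (P := P) (R := 1 + ‖y‖) (s := a),
      lamB_pos (K := K) (f := f) (P := P) (R := 1 + ‖y‖) (s := a)]
  calc etaB K f P y x * ‖P y x - P y z‖
      ≤ lamB K f P (1 + ‖y‖) a * a * (H1 K f P (1 + ‖y‖) a * dist x z) :=
        mul_le_mul hη hH1 (norm_nonneg _) (mul_nonneg lamB_pos.le ha.le)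
    _ = lamB K f P (1 + ‖y‖) a * H1 K f P (1 + ‖y‖) a * a * dist x z := by ring
    _ ≤ 1 * 1 * dist x z := by
        gcongr
        exact omegaB_le_one y x
    _ = dist x z := by ring

lemma norm_gB_sub_gB_le (hK : IsBounded K) (hP : IsPrioritySelector f P)
    (hx : x ∈ closure K) (hz : z ∈ closure K) (hxz : omegaB K f y x ≤ omegaB K f y z) :
    ‖gB K f P y x - gB K f P y z‖ ≤ (2 + ‖y‖) * dist x z := by
  have hsplit : gB K f P y x - gB K f P y z = (etaB K f P y x - etaB K f P y z) • (P y z - y) +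
      etaB K f P y x • (P y x - P y z) := by
    simp only [gB]
    module
  rw [hsplit]
  calc _ ≤ |etaB K f P y x - etaB K f P y z| * ‖P y z - y‖ +
        etaB K f P y x * ‖P y x - P y z‖ := by
        refine (norm_add_le _ _).trans_eq ?_
        rw [norm_smul, norm_smul, Real.norm_eq_abs, Real.norm_of_nonneg (etaB_nonneg hK hP)]
    _ ≤ (1 + ‖y‖) * dist x z + dist x z :=
        add_le_add (abs_etaB_sub_etaB_mul_norm_le hK hP hz hxz)
          (etaB_mul_norm_sub_le hK hP hx hz hxz)
    _ = (2 + ‖y‖) * dist x z := by ring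

end Profiles

theorem statement18_general {d m n : ℕ}
    (K : Set (Xs d)) (hK : IsBounded K)
    (f : Fin n → Xs d → Ys m)
    (P : Ys m → Xs d → Ys m) (hP : IsPrioritySelector f P) :
    ∀ y : Ys m, ∃ C : NNReal,
      LipschitzOnWith C (fun x => gB K f P y x) (closure K) := by
  intro y
  refine ⟨(2 + ‖y‖).toNNReal, LipschitzOnWith.of_dist_le_mul fun x hx z hz => ?_⟩
  rw [dist_eq_norm, Real.coe_toNNReal _ (by positivity)]
  rcases le_total (omegaB K f y x) (omegaB K f y z) with hxz | hzx
  · exact norm_gB_sub_gB_le hK hP hx hz hxz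
  · rw [norm_sub_rev, dist_comm]
    exact norm_gB_sub_gB_le hK hP hz hx hzx

/-- For every fixed `y`, the map `x ↦ g(y, x)` is globally
Lipschitz on `closure K`. -/
theorem statement18 {d m n : ℕ}
    (K : Set (Xs d)) (hK : IsBounded K)
    (f : Fin n → Xs d → Ys m) (hf : ∀ i, LocLipOn K (f i))
    (hext : IsLimitExtension K f)
    (P : Ys m → Xs d → Ys m) (hP : IsPrioritySelector f P) :
    ∀ y : Ys m, ∃ C : NNReal,
      LipschitzOnWith C (fun x => gB K f P y x) (closure K) :=
  statement18_general K hK f P hP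

end Bif
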